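/- With $\mathbb{F}=\mathbb{F}_4$ and $H$, $M$, $N$, $G=HM$ the subgroups of $\mathrm{SL}_6(\mathbb{F})$ defined below, the commutator subgroup $[[G,N],N]$ is strictly contained in $[N,N]$. (In fact $[[G,N],N]$ is trivial while $[N,N]$ consists of all block matrices with identity diagonal blocks, zero blocks in positions $(1,2)$ and $(2,3)$, and a scalar block $d\cdot I$, $d\in\mathbb{F}$, in position $(1,3)$.) -/

import Mathlib

/-- The group `SL₆(F)`, with rows and columns indexed by `Fin 3 × Fin 2`, so that
its elements can be viewed as `3 × 3` block matrices with `2 × 2` blocks. -/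
abbrev SL6 (F : Type*) [Field F] [Fintype F] : Type _ :=
  Matrix.SpecialLinearGroup (Fin 3 × Fin 2) F

/-- Assemble a `3 × 3` array of `2 × 2` blocks into a `6 × 6` matrix. -/
def blk3 {F : Type*} [Field F] (f : Fin 3 → Fin 3 → Matrix (Fin 2) (Fin 2) F) :
    Matrix (Fin 3 × Fin 2) (Fin 3 × Fin 2) F :=
  Matrix.of fun p q => f p.1 q.1 p.2 q.2

/-- The subgroup `H` of `SL₆(F)`: block diagonal matrices `diag(A, A, A)` with
`A ∈ SL₂(F)`. -/
def Hset (F : Type*) [Field F] [Fintype F] : Set (SL6 F) :=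
  {X | ∃ A : Matrix.SpecialLinearGroup (Fin 2) F,
    (X : Matrix (Fin 3 × Fin 2) (Fin 3 × Fin 2) F) =
      blk3 ![![(A : Matrix (Fin 2) (Fin 2) F), 0, 0],
              ![0, (A : Matrix (Fin 2) (Fin 2) F), 0],
              ![0, 0, (A : Matrix (Fin 2) (Fin 2) F)]]}

/-- The subgroup `M` of `SL₆(F)`: block upper unitriangular matrices with blocks
`B` (position (1,2)), `C` (position (2,3)) of trace `0` and an arbitrary block `D`
(position (1,3)). -/
def Mset (F : Type*) [Field F] [Fintype F] : Set (SL6 F) :=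
  {X | ∃ B C D : Matrix (Fin 2) (Fin 2) F, B.trace = 0 ∧ C.trace = 0 ∧
    (X : Matrix (Fin 3 × Fin 2) (Fin 3 × Fin 2) F) =
      blk3 ![![1, B, D], ![0, 1, C], ![0, 0, 1]]}

/-- The subgroup `N` of `SL₆(F)`: elements of `M` whose blocks in positions (1,2)
and (2,3) are scalar matrices `b•I` and `c•I`. -/
def Nset (F : Type*) [Field F] [Fintype F] : Set (SL6 F) :=
  {X | ∃ (b c : F) (D : Matrix (Fin 2) (Fin 2) F),
    (X : Matrix (Fin 3 × Fin 2) (Fin 3 × Fin 2) F) =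
      blk3 ![![1, b • 1, D], ![0, 1, c • 1], ![0, 0, 1]]}

/-- The group `G = HM`, i.e. the subgroup of `SL₆(F)` generated by `H ∪ M`. -/
def Gsub (F : Type*) [Field F] [Fintype F] : Subgroup (SL6 F) :=
  Subgroup.closure (Hset F ∪ Mset F)

/-!
Every element of `G` is block upper triangular with its three diagonal blocks equal: this holds
for the generators, and since `SL₆(F)` is finite the subgroup they generate is the submonoid they
generate. For such an `X` and `n ∈ N`, the matrices `X n` and `n X` differ only in the corner
block, because the off-diagonal blocks of `n` are scalars; hence `⁅X, n⁆` is `1` plus a corner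
matrix, and these commute with `N`. So `[[G, N], N] = 1`, while `N` contains the non-commuting
matrices `u ⊗ I₂` for `u` in the Heisenberg group of upper unitriangular `3 × 3` matrices.
-/

open scoped commutatorElement Kronecker

theorem Subgroup.closure_toSubmonoid_le_iff {G : Type*} [Group G] [Finite G] {s : Set G}
    {S : Submonoid G} : (closure s).toSubmonoid ≤ S ↔ s ⊆ S := by
  rw [closure_toSubmonoid_of_finite, Submonoid.closure_le]

section

variable {F : Type*} [Field F]

local notation "M2" => Matrix (Fin 2) (Fin 2) F
local notation "M6" => Matrix (Fin 3 × Fin 2) (Fin 3 × Fin 2) F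

def blockUpper (A B C D : M2) : M6 := blk3 ![![A, B, D], ![0, A, C], ![0, 0, A]]

theorem blk3_mul (f g : Fin 3 → Fin 3 → M2) :
    blk3 f * blk3 g = blk3 (fun i k => ∑ j, f i j * g j k) := by
  ext ⟨i, a⟩ ⟨k, b⟩
  simp [blk3, Matrix.mul_apply, Fintype.sum_prod_type, Matrix.sum_apply]

theorem blockUpper_mul (A B C D A' B' C' D' : M2) :
    blockUpper A B C D * blockUpper A' B' C' D' =
      blockUpper (A * A') (A * B' + B * A') (A * C' + C * A') (A * D' + B * C' + D * A') := by
  rw [blockUpper, blockUpper, blockUpper, blk3_mul]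
  congr 1
  ext i k : 2
  fin_cases i <;> fin_cases k <;> simp [Fin.sum_univ_three]

theorem blk3_add (f g : Fin 3 → Fin 3 → M2) : blk3 f + blk3 g = blk3 (f + g) := by
  ext; simp [blk3]

theorem blockUpper_add (A B C D A' B' C' D' : M2) :
    blockUpper A B C D + blockUpper A' B' C' D' =
      blockUpper (A + A') (B + B') (C + C') (D + D') := by
  rw [blockUpper, blockUpper, blockUpper, blk3_add]
  congr 1
  ext i k : 2
  fin_cases i <;> fin_cases k <;> simp

theorem kronecker_one_eq_blk3 (u : Matrix (Fin 3) (Fin 3) F) :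
    u ⊗ₖ (1 : M2) = blk3 fun i k => u i k • 1 := by
  ext; simp [blk3]

theorem blockUpper_one : blockUpper (1 : M2) 0 0 0 = 1 := by
  rw [blockUpper, ← Matrix.one_kronecker_one, kronecker_one_eq_blk3]
  congr 1
  ext i k : 2
  fin_cases i <;> fin_cases k <;> simp

def heisenberg (b c : F) : Matrix (Fin 3) (Fin 3) F := !![1, b, 0; 0, 1, c; 0, 0, 1]

theorem heisenberg_kronecker_one (b c : F) :
    heisenberg b c ⊗ₖ (1 : M2) = blockUpper 1 (b • 1) (c • 1) 0 := by
  rw [kronecker_one_eq_blk3, blockUpper]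
  congr 1
  ext i k : 2
  fin_cases i <;> fin_cases k <;> simp [heisenberg]

theorem exists_blockUpper_mul_eq_mul_add_corner (A B C D E : M2) (b c : F) :
    ∃ K : M2, blockUpper A B C D * blockUpper 1 (b • 1) (c • 1) E =
      blockUpper 1 (b • 1) (c • 1) E * blockUpper A B C D + blockUpper 0 0 0 K := by
  refine ⟨A * E - E * A + c • B - b • C, ?_⟩
  rw [blockUpper_mul, blockUpper_mul, blockUpper_add]
  congr 1 <;> simp <;> abel

theorem blockUpper_corner_commute (K B C D : M2) :
    Commute (blockUpper 1 0 0 K) (blockUpper 1 B C D) := by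
  rw [Commute, SemiconjBy, blockUpper_mul, blockUpper_mul]
  congr 1 <;> simp [add_comm]

variable [Fintype F]

variable (F) in
def blockUpperSubmonoid : Submonoid (SL6 F) where
  carrier := {X | ∃ A B C D : M2, (X : M6) = blockUpper A B C D}
  one_mem' := ⟨1, 0, 0, 0, blockUpper_one.symm⟩
  mul_mem' := by
    rintro X Y ⟨A, B, C, D, hX⟩ ⟨A', B', C', D', hY⟩
    exact ⟨_, _, _, _, by rw [Matrix.SpecialLinearGroup.coe_mul, hX, hY, blockUpper_mul]⟩

variable (F) in
def nSubmonoid : Submonoid (SL6 F) where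
  carrier := Nset F
  one_mem' := ⟨0, 0, 0, by simp only [zero_smul]; exact blockUpper_one.symm⟩
  mul_mem' := by
    rintro X Y ⟨b, c, D, hX⟩ ⟨b', c', D', hY⟩
    refine ⟨b + b', c + c', D' + (b * c') • 1 + D, ?_⟩
    rw [Matrix.SpecialLinearGroup.coe_mul, hX, hY]
    refine (blockUpper_mul 1 (b • 1) (c • 1) D 1 (b' • 1) (c' • 1) D').trans ?_
    congr 1 <;> simp [add_smul, smul_smul, add_comm, mul_comm]

theorem Nset_subset_blockUpperSubmonoid : Nset F ⊆ blockUpperSubmonoid F :=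
  fun _ ⟨b, c, D, hX⟩ => ⟨1, b • 1, c • 1, D, hX⟩

theorem mem_blockUpperSubmonoid_of_mem_Gsub {X : SL6 F} (hX : X ∈ Gsub F) :
    X ∈ blockUpperSubmonoid F := by
  refine Subgroup.closure_toSubmonoid_le_iff.mpr (Set.union_subset ?_ ?_) hX
  · rintro X ⟨A, hX⟩
    exact ⟨A, 0, 0, 0, hX⟩
  · rintro X ⟨B, C, D, -, -, hX⟩
    exact ⟨1, B, C, D, hX⟩

theorem mem_Nset_of_mem_closure {n : SL6 F} (hn : n ∈ Subgroup.closure (Nset F)) : n ∈ Nset F :=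
  (Subgroup.closure_toSubmonoid_le_iff (S := nSubmonoid F)).mpr (Set.Subset.refl (Nset F)) hn

open Matrix.SpecialLinearGroup in
theorem exists_coe_commutatorElement_eq_blockUpper {X n : SL6 F}
    (hX : X ∈ blockUpperSubmonoid F) (hn : n ∈ Nset F)
    (hnX : (n * X)⁻¹ ∈ blockUpperSubmonoid F) :
    ∃ K : M2, ((⁅X, n⁆ : SL6 F) : M6) = blockUpper 1 0 0 K := by
  obtain ⟨A, B, C, D, hX⟩ := hX
  obtain ⟨b, c, E, hn⟩ := hn
  obtain ⟨A', B', C', D', hnX⟩ := hnX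
  obtain ⟨K, hK⟩ := exists_blockUpper_mul_eq_mul_add_corner A B C D E b c
  refine ⟨K * A', ?_⟩
  calc ((⁅X, n⁆ : SL6 F) : M6) = ((X * n * (n * X)⁻¹ : SL6 F) : M6) := by
        rw [commutatorElement_def, mul_inv_rev, ← mul_assoc]
    _ = ((n * X : SL6 F) + blockUpper 0 0 0 K) * ((n * X)⁻¹ : SL6 F) := by
        rw [coe_mul, coe_mul, coe_mul, hX, hn]; exact congrArg (· * _) hK
    _ = 1 + blockUpper 0 0 0 K * blockUpper A' B' C' D' := by
        rw [add_mul, ← coe_mul, mul_inv_cancel, coe_one, hnX]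
    _ = blockUpper 1 0 0 (K * A') := by
        rw [blockUpper_mul, ← blockUpper_one, blockUpper_add]; simp

theorem commute_of_coe_eq_blockUpper {z n : SL6 F} {K : M2}
    (hz : (z : M6) = blockUpper 1 0 0 K) (hn : n ∈ Nset F) : Commute z n := by
  obtain ⟨b, c, E, hn⟩ := hn
  refine Subtype.ext ?_
  simp only [Matrix.SpecialLinearGroup.coe_mul, hz, hn]
  exact blockUpper_corner_commute K _ _ E

theorem commutatorElement_mem_centralizer_closure_Nset {X n : SL6 F} (hX : X ∈ Gsub F)
    (hn : n ∈ Subgroup.closure (Nset F)) :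
    ⁅X, n⁆ ∈ Subgroup.centralizer (Subgroup.closure (Nset F) : Set (SL6 F)) := by
  have hnX : (n * X)⁻¹ ∈ blockUpperSubmonoid F := by
    rw [mul_inv_rev]
    exact mul_mem (mem_blockUpperSubmonoid_of_mem_Gsub (inv_mem hX))
      (Nset_subset_blockUpperSubmonoid (mem_Nset_of_mem_closure (inv_mem hn)))
  obtain ⟨K, hK⟩ := exists_coe_commutatorElement_eq_blockUpper
    (mem_blockUpperSubmonoid_of_mem_Gsub hX) (mem_Nset_of_mem_closure hn) hnX
  exact Subgroup.mem_centralizer_iff.mpr fun m hm =>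
    (commute_of_coe_eq_blockUpper hK (mem_Nset_of_mem_closure hm)).eq.symm

def heisenbergSL6 (b c : F) : SL6 F :=
  ⟨heisenberg b c ⊗ₖ (1 : M2), by simp [Matrix.det_kronecker, heisenberg, Matrix.det_fin_three]⟩

theorem coe_heisenbergSL6 (b c : F) : (heisenbergSL6 b c : M6) = heisenberg b c ⊗ₖ 1 := rfl

theorem heisenbergSL6_mem_Nset (b c : F) : heisenbergSL6 b c ∈ Nset F :=
  ⟨b, c, 0, heisenberg_kronecker_one b c⟩

theorem not_commute_heisenbergSL6 : ¬Commute (heisenbergSL6 (1 : F) 0) (heisenbergSL6 0 1) := by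
  intro h
  have h02 := congrArg (fun X : SL6 F => (X : M6) (0, 0) (2, 0)) h.eq
  simp only [Matrix.SpecialLinearGroup.coe_mul, coe_heisenbergSL6, ← Matrix.mul_kronecker_mul,
    Matrix.kronecker_apply] at h02
  simp [heisenberg, Matrix.mul_apply, Fin.sum_univ_three] at h02

theorem commutator_commutator_Gsub_closure_Nset_eq_bot :
    ⁅⁅Gsub F, Subgroup.closure (Nset F)⁆, Subgroup.closure (Nset F)⁆ = ⊥ := by
  rw [Subgroup.commutator_eq_bot_iff_le_centralizer, Subgroup.commutator_le]
  exact fun X hX n hn => commutatorElement_mem_centralizer_closure_Nset hX hn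

theorem commutator_closure_Nset_ne_bot :
    ⁅Subgroup.closure (Nset F), Subgroup.closure (Nset F)⁆ ≠ ⊥ := by
  intro hNN
  have hmem := Subgroup.commutator_mem_commutator
    (Subgroup.subset_closure (heisenbergSL6_mem_Nset (1 : F) 0))
    (Subgroup.subset_closure (heisenbergSL6_mem_Nset (0 : F) 1))
  rw [hNN, Subgroup.mem_bot, commutatorElement_eq_one_iff_mul_comm] at hmem
  exact not_commute_heisenbergSL6 hmem

end

theorem commutator_GNN_lt_commutator_NN_general
    (F : Type*) [Field F] [Fintype F] :
    ⁅⁅Gsub F, Subgroup.closure (Nset F)⁆, Subgroup.closure (Nset F)⁆ <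
      ⁅Subgroup.closure (Nset F), Subgroup.closure (Nset F)⁆ := by
  rw [commutator_commutator_Gsub_closure_Nset_eq_bot, bot_lt_iff_ne_bot]
  exact commutator_closure_Nset_ne_bot

/-- **Lemma SL6 (4).** `[[G, N], N]` is strictly contained in `[N, N]`
(as subgroups of `SL₆(𝔽₄)`, with `N` the subgroup generated by the set `N`). -/
theorem commutator_GNN_lt_commutator_NN
    (F : Type*) [Field F] [Fintype F] (hF : Fintype.card F = 4) :
    ⁅⁅Gsub F, Subgroup.closure (Nset F)⁆, Subgroup.closure (Nset F)⁆ <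
      ⁅Subgroup.closure (Nset F), Subgroup.closure (Nset F)⁆ :=
  commutator_GNN_lt_commutator_NN_general F
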